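/- arXiv:1809.07542 — 13 statements merged into one kernel-verified Lean document; each statement's English description precedes it below -/
import Mathlib

section
/- Let 𝔄 be a Boolean algebra with an operator ◇ (a unary function preserving finite joins and sending ⊥ to ⊥). If 𝔄 satisfies condition 𝓡 — for all a, b, if a ∧ ◇b ≠ ⊥ then there exists c with ⊥ ≠ c ≤ b such that for all d with ⊥ ≠ d ≤ c, a ∧ ◇d ≠ ⊥ — then ◇ is completely additive: for every set X of elements whose join ⋁X exists, ⋁{◇x | x ∈ X} exists and equals ◇⋁X. -/
/-!
Let `s = ⋁X` and let `u` bound every `◇x`, `x ∈ X`. If `◇s ≰ u`, then `uᶜ ⊓ ◇s ≠ ⊥`, and 𝓡 yields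
`⊥ ≠ c ≤ s` with `uᶜ ⊓ ◇d ≠ ⊥` for every nonzero `d ≤ c`. Since `c ≤ ⋁X`, `c` meets some `x ∈ X`,
and `d = c ⊓ x` gives the contradiction `◇d ≤ ◇x ≤ u`.
-/

open Set

theorem IsLUB.exists_mem_not_disjoint {α : Type*} [HeytingAlgebra α] {X : Set α} {s c : α}
    (hs : IsLUB X s) (hc : c ≠ ⊥) (hcs : c ≤ s) : ∃ x ∈ X, ¬Disjoint c x := by
  by_contra! hX
  have hscompl : s ≤ cᶜ := hs.2 fun x hx => le_compl_iff_disjoint_left.mpr (hX x hx)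
  exact hc (le_compl_self.mp (hcs.trans hscompl))

theorem Monotone.isLUB_image_of_forall_exists {α β : Type*} [HeytingAlgebra α]
    [BooleanAlgebra β] {f : α → β} (hf : Monotone f)
    (hR : ∀ a b, a ⊓ f b ≠ ⊥ → ∃ c, c ≠ ⊥ ∧ c ≤ b ∧ ∀ d, d ≠ ⊥ → d ≤ c → a ⊓ f d ≠ ⊥)
    {X : Set α} {s : α} (hs : IsLUB X s) : IsLUB (f '' X) (f s) := by
  refine ⟨hf.mem_upperBounds_image hs.1, fun u hu => ?_⟩
  by_contra hsu
  obtain ⟨c, hc, hcs, hcR⟩ := hR uᶜ s fun h =>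
    hsu (disjoint_compl_left_iff.mp (disjoint_iff.mpr h))
  obtain ⟨x, hx, hcx⟩ := hs.exists_mem_not_disjoint hc hcs
  refine hcR (c ⊓ x) (disjoint_iff.not.mp hcx) inf_le_left (disjoint_iff.mp ?_)
  exact disjoint_compl_left_iff.mpr ((hf inf_le_right).trans (hu (mem_image_of_mem f hx)))

theorem stmt_1_general {α : Type*} [BooleanAlgebra α] (f : α → α)
    (hjoin : ∀ x y : α, f (x ⊔ y) = f x ⊔ f y)
    (hR : ∀ a b : α, a ⊓ f b ≠ ⊥ →
      ∃ c, c ≠ ⊥ ∧ c ≤ b ∧ ∀ d, d ≠ ⊥ → d ≤ c → a ⊓ f d ≠ ⊥) :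
    ∀ (X : Set α) (s : α), IsLUB X s → IsLUB (f '' X) (f s) :=
  fun _ _ => (OrderHomClass.mono (SupHom.mk f hjoin)).isLUB_image_of_forall_exists hR

/-- Condition 𝓡 implies complete additivity of an operator on a Boolean algebra. -/
theorem stmt_1 {α : Type*} [BooleanAlgebra α] (f : α → α)
    (hjoin : ∀ x y : α, f (x ⊔ y) = f x ⊔ f y) (hbot : f ⊥ = ⊥)
    (hR : ∀ a b : α, a ⊓ f b ≠ ⊥ →
      ∃ c, c ≠ ⊥ ∧ c ≤ b ∧ ∀ d, d ≠ ⊥ → d ≤ c → a ⊓ f d ≠ ⊥) :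
    ∀ (X : Set α) (s : α), IsLUB X s → IsLUB (f '' X) (f s) :=
  stmt_1_general f hjoin hR
end

section
/- Let 𝔄 be a Boolean algebra with an operator ◇. If ◇ is completely additive, then 𝔄 satisfies condition 𝓡: for all a, b, if a ∧ ◇b ≠ ⊥ then there exists c with ⊥ ≠ c ≤ b such that for all d with ⊥ ≠ d ≤ c, a ∧ ◇d ≠ ⊥. -/
/-!
Let `X` be the set of `x ≤ b` with `a ⊓ ◇x = ⊥`. If `𝓡` failed at `a, b`, every nonzero
`c ≤ b` would have a nonzero part in `X`, so `b = ⋁ X`. Complete additivity then gives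
`◇b = ⋁ ◇[X]`, which is disjoint from `a`, contradicting `a ⊓ ◇b ≠ ⊥`.
-/

theorem isLUB_of_forall_exists_mem_le {α : Type*} [GeneralizedBooleanAlgebra α]
    {X : Set α} {b : α} (hXb : ∀ x ∈ X, x ≤ b)
    (hdense : ∀ c, c ≠ ⊥ → c ≤ b → ∃ d ∈ X, d ≠ ⊥ ∧ d ≤ c) : IsLUB X b := by
  refine ⟨hXb, fun u hu => ?_⟩
  by_contra hbu
  obtain ⟨d, hdX, hd, hdc⟩ := hdense (b \ u) (fun h => hbu (sdiff_eq_bot_iff.mp h)) sdiff_le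
  exact hd (disjoint_sdiff_self_left.mono_left hdc |>.eq_bot_of_le (hu hdX))

theorem disjoint_of_isLUB {α : Type*} [HeytingAlgebra α] {S : Set α} {s a : α}
    (hs : IsLUB S s) (hS : ∀ x ∈ S, Disjoint a x) : Disjoint a s :=
  le_compl_iff_disjoint_left.mp <| hs.2 fun x hx => le_compl_iff_disjoint_left.mpr (hS x hx)

theorem stmt_2_general {α : Type*} [BooleanAlgebra α] (f : α → α)
    (hV : ∀ (X : Set α) (s : α), IsLUB X s → IsLUB (f '' X) (f s)) :
    ∀ a b : α, a ⊓ f b ≠ ⊥ →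
      ∃ c, c ≠ ⊥ ∧ c ≤ b ∧ ∀ d, d ≠ ⊥ → d ≤ c → a ⊓ f d ≠ ⊥ := by
  intro a b hab
  by_contra! h
  let X : Set α := {x | x ≤ b ∧ Disjoint a (f x)}
  have hX : IsLUB X b := isLUB_of_forall_exists_mem_le (fun x hx => hx.1) fun c hc hcb => by
    obtain ⟨d, hd, hdc, hfd⟩ := h c hc hcb
    exact ⟨d, ⟨hdc.trans hcb, disjoint_iff.mpr hfd⟩, hd, hdc⟩
  refine hab (disjoint_iff.mp (disjoint_of_isLUB (hV X b hX) ?_))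
  rintro _ ⟨x, hx, rfl⟩
  exact hx.2

/-- Complete additivity implies condition 𝓡. -/
theorem stmt_2 {α : Type*} [BooleanAlgebra α] (f : α → α)
    (hjoin : ∀ x y : α, f (x ⊔ y) = f x ⊔ f y) (hbot : f ⊥ = ⊥)
    (hV : ∀ (X : Set α) (s : α), IsLUB X s → IsLUB (f '' X) (f s)) :
    ∀ a b : α, a ⊓ f b ≠ ⊥ →
      ∃ c, c ≠ ⊥ ∧ c ≤ b ∧ ∀ d, d ≠ ⊥ → d ≤ c → a ⊓ f d ≠ ⊥ :=
  stmt_2_general f hV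
end

section
/- Complete additivity of an operator on a BAO is equivalent to the first-order condition 𝓡: an operator ◇ on a Boolean algebra is completely additive if and only if for all a, b, whenever a ∧ ◇b ≠ ⊥, there exists c with ⊥ ≠ c ≤ b such that a ∧ ◇d ≠ ⊥ for all d with ⊥ ≠ d ≤ c. -/
/-!
If `◇` is completely additive and `a ⊓ ◇b ≠ ⊥`, the elements `d ≤ b` with `a ⊓ ◇d = ⊥` cannot be
dense below `b`: otherwise their join would be `b`, and `◇b` would lie below `aᶜ`. A nonzero `c ≤ b`
below which no such `d` lives is the witness of `𝓡`.

Conversely, let `s` be the join of `X` and suppose `◇s` is not below an upper bound `u` of `◇[X]`.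
Condition `𝓡` with `a = uᶜ` gives a nonzero `c ≤ s` all of whose nonzero parts `d` satisfy
`uᶜ ⊓ ◇d ≠ ⊥`. By monotonicity `◇(c ⊓ x) ≤ u` for `x ∈ X`, so `c` is disjoint from every `x ∈ X`,
hence from `s ≥ c`: a contradiction.
-/

section

variable {α : Type*}

def CompletelyAdditive [Preorder α] (f : α → α) : Prop :=
  ∀ (X : Set α) (s : α), IsLUB X s → IsLUB (f '' X) (f s)

def ConditionR [Lattice α] [OrderBot α] (f : α → α) : Prop :=
  ∀ a b : α, a ⊓ f b ≠ ⊥ → ∃ c, c ≠ ⊥ ∧ c ≤ b ∧ ∀ d, d ≠ ⊥ → d ≤ c → a ⊓ f d ≠ ⊥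

variable [BooleanAlgebra α]

theorem isLUB_of_forall_exists_le {X : Set α} {b : α} (hXb : ∀ x ∈ X, x ≤ b)
    (hdense : ∀ c, c ≠ ⊥ → c ≤ b → ∃ d ∈ X, d ≠ ⊥ ∧ d ≤ c) : IsLUB X b := by
  refine ⟨hXb, fun u hu => ?_⟩
  by_contra hbu
  have hc : b ⊓ uᶜ ≠ ⊥ := fun h => hbu (disjoint_compl_right_iff.mp (disjoint_iff.mpr h))
  obtain ⟨d, hdX, hd, hdc⟩ := hdense _ hc inf_le_left
  have hdu : d ≤ u ⊓ uᶜ := le_inf (hu hdX) (hdc.trans inf_le_right)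
  exact hd (le_bot_iff.mp (by rwa [inf_compl_eq_bot] at hdu))

theorem IsLUB.exists_inf_ne_bot {X : Set α} {s c : α} (hs : IsLUB X s) (hc : c ≠ ⊥)
    (hcs : c ≤ s) : ∃ x ∈ X, c ⊓ x ≠ ⊥ := by
  by_contra! hX
  have hsc : s ≤ cᶜ := hs.2 fun x hx => le_compl_iff_disjoint_left.mpr (disjoint_iff.mpr (hX x hx))
  exact hc (le_compl_self.mp (hcs.trans hsc))

theorem CompletelyAdditive.conditionR {f : α → α} (hf : CompletelyAdditive f) :
    ConditionR f := by
  intro a b hab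
  by_contra! hR
  let X : Set α := {d | d ≤ b ∧ a ⊓ f d = ⊥}
  have hXb : IsLUB X b :=
    isLUB_of_forall_exists_le (fun _ hd => hd.1) fun c hc hcb => by
      obtain ⟨d, hd, hdc, had⟩ := hR c hc hcb
      exact ⟨d, ⟨hdc.trans hcb, had⟩, hd, hdc⟩
  have hfb : f b ≤ aᶜ := (hf X b hXb).2 <| by
    rintro _ ⟨d, hd, rfl⟩
    exact le_compl_iff_disjoint_left.mpr (disjoint_iff.mpr hd.2)
  exact hab (disjoint_iff.mp (le_compl_iff_disjoint_left.mp hfb))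

theorem Monotone.completelyAdditive_of_conditionR {f : α → α} (hmono : Monotone f)
    (hR : ConditionR f) : CompletelyAdditive f := by
  intro X s hs
  refine ⟨Set.forall_mem_image.mpr fun x hx => hmono (hs.1 hx), fun u hu => ?_⟩
  by_contra hsu
  have hus : uᶜ ⊓ f s ≠ ⊥ := fun h =>
    hsu (disjoint_compl_left_iff.mp (disjoint_iff.mpr h))
  obtain ⟨c, hc, hcs, hcd⟩ := hR uᶜ s hus
  obtain ⟨x, hx, hcx⟩ := hs.exists_inf_ne_bot hc hcs
  have hfcx : f (c ⊓ x) ≤ u := (hmono inf_le_right).trans (hu ⟨x, hx, rfl⟩)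
  exact hcd _ hcx inf_le_left (disjoint_iff.mp (disjoint_compl_left_iff.mpr hfcx))

end

theorem stmt_3_general {α : Type*} [BooleanAlgebra α] (f : α → α)
    (hjoin : ∀ x y : α, f (x ⊔ y) = f x ⊔ f y) :
    (∀ (X : Set α) (s : α), IsLUB X s → IsLUB (f '' X) (f s)) ↔
    (∀ a b : α, a ⊓ f b ≠ ⊥ →
      ∃ c, c ≠ ⊥ ∧ c ≤ b ∧ ∀ d, d ≠ ⊥ → d ≤ c → a ⊓ f d ≠ ⊥) :=
  have hmono : Monotone f := OrderHomClass.mono (SupHom.mk f hjoin)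
  ⟨CompletelyAdditive.conditionR, hmono.completelyAdditive_of_conditionR⟩

/-- Complete additivity of an operator on a BAO is equivalent to the
first-order condition 𝓡. -/
theorem stmt_3 {α : Type*} [BooleanAlgebra α] (f : α → α)
    (hjoin : ∀ x y : α, f (x ⊔ y) = f x ⊔ f y) (hbot : f ⊥ = ⊥) :
    (∀ (X : Set α) (s : α), IsLUB X s → IsLUB (f '' X) (f s)) ↔
    (∀ a b : α, a ⊓ f b ≠ ⊥ →
      ∃ c, c ≠ ⊥ ∧ c ≤ b ∧ ∀ d, d ≠ ⊥ → d ≤ c → a ⊓ f d ≠ ⊥) :=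
  stmt_3_general f hjoin
end

section
/- Let 𝔄 be a Boolean algebra with an operator ◇ that admits a conjugate, i.e., there is a function p: 𝔄 → 𝔄 such that for all a, b: a ∧ ◇b = ⊥ if and only if p(a) ∧ b = ⊥. Then 𝔄 satisfies condition 𝓡: for all a, b with a ∧ ◇b ≠ ⊥, there exists c with ⊥ ≠ c ≤ b such that a ∧ ◇d ≠ ⊥ for all d with ⊥ ≠ d ≤ c. (Witness: c := p(a) ∧ b.) -/
theorem stmt_4_general {α : Type*} [BooleanAlgebra α] (f p : α → α)
    (hconj : ∀ a b : α, a ⊓ f b = ⊥ ↔ p a ⊓ b = ⊥) :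
    ∀ a b : α, a ⊓ f b ≠ ⊥ →
      ∃ c, c ≠ ⊥ ∧ c ≤ b ∧ ∀ d, d ≠ ⊥ → d ≤ c → a ⊓ f d ≠ ⊥ := by
  intro a b hab
  refine ⟨p a ⊓ b, mt (hconj a b).mpr hab, inf_le_right, fun d hd hdc had => hd ?_⟩
  -- `d ≤ p a`, so `p a ⊓ d = ⊥` forces `d = ⊥`.
  exact (inf_eq_right.mpr (hdc.trans inf_le_left)).symm.trans ((hconj a d).mp had)

/-- If the operator `f` admits a conjugate `p`, then condition 𝓡 holds. -/
theorem stmt_4 {α : Type*} [BooleanAlgebra α] (f p : α → α)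
    (hjoin : ∀ x y : α, f (x ⊔ y) = f x ⊔ f y) (hbot : f ⊥ = ⊥)
    (hconj : ∀ a b : α, a ⊓ f b = ⊥ ↔ p a ⊓ b = ⊥) :
    ∀ a b : α, a ⊓ f b ≠ ⊥ →
      ∃ c, c ≠ ⊥ ∧ c ≤ b ∧ ∀ d, d ≠ ⊥ → d ≤ c → a ⊓ f d ≠ ⊥ :=
  stmt_4_general f p hconj
end

section
/- Let 𝔄 be a Boolean algebra, a ∈ 𝔄, and let ◇₀ and ◇₁ be operators on 𝔄 (unary functions preserving finite joins and ⊥), with duals □ᵢx := ¬◇ᵢ¬x. Suppose (1) ◇₁ is completely additive, and (2) for every x ∈ 𝔄, a ≤ □₁(□₀(□₀x → x) → x), where u → v abbreviates ¬u ∨ v. Then a ≤ □₁⊥. -/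
/-!
Let `X` be the set of all `y` with `◇₁ y ≤ ¬a`. The hypothesis says exactly that every
Löb defect `□₀(□₀x → x) ∧ ¬x` lies in `X`, and the defects have join `⊤` in any Boolean
algebra with a normal operator `◇₀`: if `b` bounds them all, the defect at `b` gives
`□₀((□₀b)ᶜ ∨ b) ≤ b`, and then the defect at `d := (□₀b)ᶜ ∨ b` collapses to `¬d`, forcing
`d = ⊤` and hence `⊤ = □₀d ≤ b`. Complete additivity of `◇₁` transfers the bound
`◇₁ y ≤ ¬a` from `X` to its join, so `◇₁⊤ ≤ ¬a`, i.e. `a ≤ □₁⊥`.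
-/

/-- The dual box of an operator `f` on a Boolean algebra. -/
def mbox {α : Type*} [BooleanAlgebra α] (f : α → α) (x : α) : α := (f xᶜ)ᶜ

section

variable {α : Type*} [BooleanAlgebra α] {f : α → α}

theorem le_of_inf_compl_le {x y : α} (h : x ⊓ yᶜ ≤ y) : x ≤ y :=
  sup_inf_inf_compl (x := x) (y := y) ▸ sup_le inf_le_right h

theorem mbox_top (hf : f ⊥ = ⊥) : mbox f ⊤ = ⊤ := by
  simp [mbox, hf]

def lobDefect (f : α → α) (x : α) : α :=
  mbox f ((mbox f x)ᶜ ⊔ x) ⊓ xᶜ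

theorem isLUB_range_lobDefect (hf : f ⊥ = ⊥) : IsLUB (Set.range (lobDefect f)) ⊤ := by
  refine ⟨fun _ _ => le_top, fun b hb => ?_⟩
  have defect_le (x : α) : lobDefect f x ≤ b := hb ⟨x, rfl⟩
  set d := (mbox f b)ᶜ ⊔ b
  have hbox_d : mbox f d ≤ b := le_of_inf_compl_le (defect_le b)
  have hd : (mbox f d)ᶜ ⊔ d = ⊤ :=
    top_le_iff.1 <| compl_sup_eq_top (x := mbox f d) ▸
      sup_le_sup_left (hbox_d.trans le_sup_right) _
  have hd_top : d = ⊤ := by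
    have hd_compl : dᶜ ≤ b := by simpa [lobDefect, hd, mbox_top hf] using defect_le d
    exact compl_le_self.1 (hd_compl.trans le_sup_right)
  simpa [hd_top, mbox_top hf] using hbox_d

end

theorem stmt_7_general {α : Type*} [BooleanAlgebra α] (f0 f1 : α → α) (a : α)
    (h0bot : f0 ⊥ = ⊥)
    (hV : ∀ (X : Set α) (s : α), IsLUB X s → IsLUB (f1 '' X) (f1 s))
    (hax : ∀ x : α, a ≤ mbox f1 ((mbox f0 ((mbox f0 x)ᶜ ⊔ x))ᶜ ⊔ x)) :
    a ≤ mbox f1 ⊥ := by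
  have hdefect (x : α) : f1 (lobDefect f0 x) ≤ aᶜ := by
    simpa [mbox, lobDefect] using compl_le_compl (hax x)
  have htop : f1 ⊤ ≤ aᶜ := by
    refine (hV _ ⊤ (isLUB_range_lobDefect h0bot)).2 ?_
    rintro _ ⟨_, ⟨x, rfl⟩, rfl⟩
    exact hdefect x
  rw [mbox, compl_bot]
  exact le_compl_comm.1 htop

/-- Theorem 5.1 of the paper: if `◇₁` is completely additive and
`a ≤ □₁(□₀(□₀x → x) → x)` for all `x`, then `a ≤ □₁⊥`. -/
theorem stmt_7 {α : Type*} [BooleanAlgebra α] (f0 f1 : α → α) (a : α)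
    (h0join : ∀ x y : α, f0 (x ⊔ y) = f0 x ⊔ f0 y) (h0bot : f0 ⊥ = ⊥)
    (h1join : ∀ x y : α, f1 (x ⊔ y) = f1 x ⊔ f1 y) (h1bot : f1 ⊥ = ⊥)
    (hV : ∀ (X : Set α) (s : α), IsLUB X s → IsLUB (f1 '' X) (f1 s))
    (hax : ∀ x : α, a ≤ mbox f1 ((mbox f0 ((mbox f0 x)ᶜ ⊔ x))ᶜ ⊔ x)) :
    a ≤ mbox f1 ⊥ :=
  stmt_7_general f0 f1 a h0bot hV hax
end

section
/- Let 𝔄 be a Boolean algebra with a completely additive operator ◇, with dual □x = ¬◇¬x. If for every x ∈ 𝔄 the inequality □◇⊤ ≤ □(□(□x → x) → x) holds, then □◇⊤ ≤ □⊥. (Algebraic statement that every completely additive modal algebra validating the van Benthem axiom validates □◇⊤ → □⊥.) -/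
section

variable {α : Type*} [BooleanAlgebra α] {f : α → α}

lemma exists_ne_bot_forall_le_of_not_map_top_le
    (hf : ∀ (X : Set α) (s : α), IsLUB X s → IsLUB (f '' X) (f s)) {c : α} (h : ¬ f ⊤ ≤ c) :
    ∃ a₀ ≠ ⊥, ∀ b ≤ a₀, f b ≤ c → b = ⊥ := by
  by_contra! hdense
  have hlub : IsLUB {x | f x ≤ c} ⊤ := by
    refine ⟨fun _ _ ↦ le_top, fun u hu ↦ ?_⟩
    by_contra hu_top
    obtain ⟨b, hb_le, hb_mem, hb_ne⟩ := hdense uᶜ (by simpa using hu_top)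
    exact hb_ne (disjoint_self.mp (disjoint_compl_right.mono (hu hb_mem) hb_le))
  exact h ((hf _ _ hlub).2 (Set.image_subset_iff.mpr fun _ hx ↦ hx))

lemma mbox_vanBenthem_compl (a : α) :
    mbox f ((mbox f ((mbox f aᶜ)ᶜ ⊔ aᶜ))ᶜ ⊔ aᶜ) = (f (a ⊓ (f (a ⊓ (f a)ᶜ))ᶜ))ᶜ := by
  simp only [mbox, compl_compl, compl_sup, inf_comm]

lemma eq_bot_of_forall_le_map_inf_compl_map (hmono : Monotone f) (hbot : f ⊥ = ⊥) {a₀ : α}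
    (h : ∀ a ≤ a₀, a ≤ f (a ⊓ (f a)ᶜ)) : a₀ = ⊥ := by
  have hb : a₀ ⊓ (f a₀)ᶜ = ⊥ := by
    have hb_le := (h (a₀ ⊓ (f a₀)ᶜ) inf_le_left).trans (hmono (inf_le_left.trans inf_le_left))
    exact le_bot_iff.mp (inf_compl_self (f a₀) ▸ le_inf hb_le inf_le_right)
  simpa [hb, hbot] using h a₀ le_rfl

end

/-- Every completely additive modal algebra validating the van Benthem axiom
`□◇⊤ → □(□(□p → p) → p)` satisfies `□◇⊤ ≤ □⊥`. -/
theorem stmt_8 {α : Type*} [BooleanAlgebra α] (f : α → α)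
    (hjoin : ∀ x y : α, f (x ⊔ y) = f x ⊔ f y) (hbot : f ⊥ = ⊥)
    (hV : ∀ (X : Set α) (s : α), IsLUB X s → IsLUB (f '' X) (f s))
    (hax : ∀ x : α, mbox f (f ⊤) ≤ mbox f ((mbox f ((mbox f x)ᶜ ⊔ x))ᶜ ⊔ x)) :
    mbox f (f ⊤) ≤ mbox f ⊥ := by
  have hmono : Monotone f := fun a b hab ↦ by
    rw [← sup_eq_right.mpr hab, hjoin]
    exact le_sup_left
  set w := mbox f (f ⊤)
  suffices f ⊤ ≤ wᶜ by simpa [mbox] using le_compl_comm.mp this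
  by_contra h
  obtain ⟨a₀, ha₀, hX⟩ := exists_ne_bot_forall_le_of_not_map_top_le hV h
  refine ha₀ (eq_bot_of_forall_le_map_inf_compl_map hmono hbot fun a ha ↦ ?_)
  have hc : a ⊓ (f (a ⊓ (f a)ᶜ))ᶜ = ⊥ := by
    refine hX _ (inf_le_left.trans ha) (le_compl_comm.mp ?_)
    simpa only [mbox_vanBenthem_compl] using hax aᶜ
  simpa using (disjoint_iff.mpr hc).le_compl_right
end

section
/- In a Boolean algebra with an operator ◇, if an element c satisfies c ≤ ◇(c ∧ □¬c) (where □x = ¬◇¬x), then c = ⊥. -/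
/-! The element `d = c ⊓ □¬c` lies below both `◇d` (as `d ≤ c ≤ ◇d`) and `□¬d = (◇d)ᶜ`
(as `◇d ≤ ◇c` by monotonicity), so `d = ⊥`; then `c ≤ ◇d = ◇⊥ = ⊥`. -/

theorem inf_compl_map_eq_bot_of_le_map {α : Type*} [HeytingAlgebra α] {f : α → α}
    (hf : Monotone f) {c : α} (hc : c ≤ f (c ⊓ (f c)ᶜ)) : c ⊓ (f c)ᶜ = ⊥ := by
  set d := c ⊓ (f c)ᶜ
  have hd_le_map : d ≤ f d := inf_le_left.trans hc
  have hd_le_compl : d ≤ (f d)ᶜ := inf_le_right.trans (compl_le_compl (hf inf_le_left))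
  exact le_bot_iff.mp <| (le_inf hd_le_map hd_le_compl).trans inf_compl_eq_bot.le

/-- In a Boolean algebra with an operator `f` (with `□x = (f xᶜ)ᶜ`, so that
`□¬c = (f c)ᶜ`), if `c ≤ ◇(c ⊓ □¬c)` then `c = ⊥`. -/
theorem stmt_9 {α : Type*} [BooleanAlgebra α] (f : α → α)
    (hjoin : ∀ x y : α, f (x ⊔ y) = f x ⊔ f y) (hbot : f ⊥ = ⊥)
    (c : α) (hc : c ≤ f (c ⊓ (f c)ᶜ)) :
    c = ⊥ := by
  have hf : Monotone f := OrderHomClass.mono (⟨f, hjoin⟩ : SupHom α α)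
  rw [inf_compl_map_eq_bot_of_le_map hf hc, hbot] at hc
  exact le_bot_iff.mp hc
end

section
/- Every Kripke frame that validates the van Benthem axiom □◇⊤ → □(□(□p → p) → p) also validates □◇⊤ → □⊥. Equivalently: in a Kripke frame ⟨W,R⟩ where the van Benthem axiom is valid, for every x ∈ W with R(x) ≠ ∅ there exists w ∈ R(x) with R(w) = ∅. -/
/-!
Suppose every successor of `x` has a successor, and instantiate the van Benthem axiom at `x`
with the valuation `p := W \ R(x)`. At a successor `v` of `x` the axiom fails to make `p` true,
so its antecedent fails: some `u ∈ R(v) ∩ R(x)` sees no point of `R(x)`. For such a `u` the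
antecedent holds vacuously, so the axiom at `u` puts `u` outside `R(x)`, a contradiction.
-/

theorem exists_succ_isolated_of_vanBenthem {W : Type*} (R : W → W → Prop)
    (hvB : ∀ (P : W → Prop) (w : W),
      (∀ v, R w v → ∃ u, R v u) →
      ∀ v, R w v →
        ((∀ u, R v u → ((∀ t, R u t → P t) → P u)) → P v))
    {x : W} (hx : ∀ v, R x v → ∃ u, R v u) {v : W} (hv : R x v) :
    ∃ u, R v u ∧ R x u ∧ ∀ t, R u t → ¬ R x t := by
  by_contra! h
  exact hvB (fun t => ¬ R x t) x hx v hv (fun u hvu hu hxu =>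
    let ⟨t, hut, hxt⟩ := h u hvu hxu; hu t hut hxt) hv

/-- Every Kripke frame validating the van Benthem axiom
`□◇⊤ → □(□(□p → p) → p)` also validates `□◇⊤ → □⊥`: for every `x` with a
successor there is a successor of `x` with no successors. -/
theorem stmt_10 {W : Type*} (R : W → W → Prop)
    (hvB : ∀ (P : W → Prop) (w : W),
      (∀ v, R w v → ∃ u, R v u) →
      ∀ v, R w v →
        ((∀ u, R v u → ((∀ t, R u t → P t) → P u)) → P v)) :
    ∀ x : W, (∃ y, R x y) → ∃ w, R x w ∧ ∀ u, ¬ R w u := by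
  rintro x ⟨y, hxy⟩
  by_contra! hx
  obtain ⟨u, -, hxu, hu⟩ := exists_succ_isolated_of_vanBenthem R hvB hx hxy
  obtain ⟨t, hut, hxt, -⟩ := exists_succ_isolated_of_vanBenthem R hvB hx hxu
  exact hu t hut hxt
end

section
/- In the van Benthem general frame 𝒱ℬ = ⟨W, R, 𝒜⟩, where W = ℕ ∪ {∞, ∞+1}, R relates ∞+1 to ∞, ∞ to itself and to every n ∈ ℕ, and m to n for m,n ∈ ℕ with m > n, and 𝒜 consists of the finite sets not containing ∞ together with the cofinite sets containing ∞: the collection 𝒜 is closed under union, relative complement, and the operation X ↦ R⁻¹[X] = {w | ∃x ∈ X, wRx}. -/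
/-- Worlds of the van Benthem frame: ℕ together with ∞ and ∞+1. -/
inductive VBW : Type
  | nat : ℕ → VBW
  | inf : VBW
  | infp : VBW

/-- Accessibility relation of the van Benthem frame. -/
def VBR : VBW → VBW → Prop
  | VBW.infp, VBW.inf => True
  | VBW.inf, VBW.inf => True
  | VBW.inf, VBW.nat _ => True
  | VBW.nat m, VBW.nat n => n < m
  | _, _ => False

/-- Admissible sets: finite sets not containing ∞ and cofinite sets containing ∞. -/
def VBAdm (A : Set VBW) : Prop :=
  (A.Finite ∧ VBW.inf ∉ A) ∨ (Aᶜ.Finite ∧ VBW.inf ∈ A)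

/-! Proof idea: union and complement are routine for the finite/cofinite dichotomy. For
`R⁻¹[A]`: if `A` contains some `k ∈ ℕ`, then `∞` and every `m > k` see `k`, so `R⁻¹[A]` is
cofinite and contains `∞`; a cofinite `A` always contains such a `k`. Otherwise `A ⊆ {∞+1}`,
and since no world sees `∞+1`, `R⁻¹[A]` is empty. -/

namespace VBW

theorem nat_injective : Function.Injective VBW.nat := fun _ _ h => by cases h; rfl

theorem not_VBR_infp (w : VBW) : ¬ VBR w infp := by
  cases w <;> simp [VBR]

theorem VBR_inf_nat (k : ℕ) : VBR inf (nat k) := trivial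

theorem VBR_nat_nat {m k : ℕ} (h : k < m) : VBR (nat m) (nat k) := h

theorem exists_nat_mem_of_compl_finite {A : Set VBW} (hA : Aᶜ.Finite) : ∃ k, nat k ∈ A := by
  obtain ⟨k, hk⟩ := (hA.preimage nat_injective.injOn).infinite_compl.nonempty
  exact ⟨k, by simpa using hk⟩

theorem compl_VBR_preimage_subset {A : Set VBW} {k : ℕ} (hk : nat k ∈ A) :
    {w | ∃ x ∈ A, VBR w x}ᶜ ⊆ nat '' Set.Iic k ∪ {infp} := by
  rintro (m | _ | _) hw
  · refine Or.inl ⟨m, ?_, rfl⟩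
    by_contra hm
    exact hw ⟨_, hk, VBR_nat_nat (not_le.mp hm)⟩
  · exact absurd ⟨_, hk, VBR_inf_nat k⟩ hw
  · exact Or.inr rfl

theorem VBR_preimage_eq_empty {A : Set VBW} (hinf : inf ∉ A) (hnat : ∀ k, nat k ∉ A) :
    {w | ∃ x ∈ A, VBR w x} = ∅ := by
  refine Set.eq_empty_of_forall_notMem ?_
  rintro w ⟨(k | _ | _), hx, hR⟩
  exacts [hnat k hx, hinf hx, not_VBR_infp w hR]

end VBW

open VBW

theorem VBAdm.of_nat_mem {A : Set VBW} {k : ℕ} (hk : nat k ∈ A) :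
    VBAdm {w | ∃ x ∈ A, VBR w x} :=
  Or.inr ⟨(((Set.finite_Iic k).image nat).union (Set.finite_singleton infp)).subset
    (compl_VBR_preimage_subset hk), ⟨_, hk, VBR_inf_nat k⟩⟩

theorem VBAdm.union {A B : Set VBW} (hA : VBAdm A) (hB : VBAdm B) : VBAdm (A ∪ B) := by
  rcases hA with ⟨hA, hAi⟩ | ⟨hA, hAi⟩
  · rcases hB with ⟨hB, hBi⟩ | ⟨hB, hBi⟩
    · exact Or.inl ⟨hA.union hB, by simp [hAi, hBi]⟩
    · exact Or.inr ⟨hB.subset (by simp), Or.inr hBi⟩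
  · exact Or.inr ⟨hA.subset (by simp), Or.inl hAi⟩

theorem VBAdm.compl {A : Set VBW} (hA : VBAdm A) : VBAdm Aᶜ := by
  rcases hA with ⟨hA, hAi⟩ | ⟨hA, hAi⟩
  · exact Or.inr ⟨by simpa using hA, hAi⟩
  · exact Or.inl ⟨hA, by simpa using hAi⟩

theorem VBAdm.VBR_preimage {A : Set VBW} (hA : VBAdm A) : VBAdm {w | ∃ x ∈ A, VBR w x} := by
  rcases hA with ⟨-, hAi⟩ | ⟨hA, -⟩
  · by_cases hnat : ∃ k, nat k ∈ A
    · obtain ⟨k, hk⟩ := hnat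
      exact of_nat_mem hk
    · rw [VBR_preimage_eq_empty hAi (not_exists.mp hnat)]
      exact Or.inl ⟨Set.finite_empty, Set.notMem_empty _⟩
  · obtain ⟨k, hk⟩ := exists_nat_mem_of_compl_finite hA
    exact of_nat_mem hk

/-- The admissible sets of the van Benthem general frame are closed under
union, (relative) complement, and the operation `X ↦ R⁻¹[X]`. -/
theorem stmt_11 :
    (∀ A B : Set VBW, VBAdm A → VBAdm B → VBAdm (A ∪ B)) ∧
    (∀ A : Set VBW, VBAdm A → VBAdm Aᶜ) ∧
    (∀ A : Set VBW, VBAdm A → VBAdm {w | ∃ x ∈ A, VBR w x}) :=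
  ⟨fun _ _ => VBAdm.union, fun _ => VBAdm.compl, fun _ => VBAdm.VBR_preimage⟩
end

section
/- The van Benthem axiom □◇⊤ → □(□(□p → p) → p) is valid over the van Benthem general frame 𝒱ℬ: for every valuation assigning admissible sets to propositional variables, the axiom is true at every point; whereas □◇⊤ → □⊥ fails at the point ∞+1. -/
/-!
`□◇⊤` fails at every world that sees the dead end `0`, i.e. at every world other than `0` and
`∞+1` that has a successor; so only `w = ∞+1`, whose unique successor is `∞`, needs an argument.
If `□(□p → p)` holds at `∞`, then `□p → p` holds at every natural number, and strong induction
puts all of `ℕ` into `p`. An admissible set that is infinite must be the cofinite kind, which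
contains `∞`.
-/

theorem VBR_infp_iff {v : VBW} : VBR VBW.infp v ↔ v = VBW.inf := by
  cases v <;> simp [VBR]

theorem not_VBR_nat_zero (u : VBW) : ¬ VBR (VBW.nat 0) u := by
  cases u <;> simp [VBR]

theorem VBR_nat_zero_of_VBR {w v : VBW} (hwv : VBR w v) (hw : w ≠ VBW.infp) :
    VBR w (VBW.nat 0) := by
  cases w with
  | nat m => cases v <;> simp only [VBR] at hwv ⊢; omega
  | inf => trivial
  | infp => exact absurd rfl hw

theorem VBAdm.inf_mem_of_infinite {A : Set VBW} (hA : VBAdm A) (hinf : A.Infinite) :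
    VBW.inf ∈ A := by
  rcases hA with ⟨hfin, -⟩ | ⟨-, hmem⟩
  · exact absurd hfin hinf
  · exact hmem

theorem nat_mem_of_loeb {P : Set VBW}
    (H : ∀ u, VBR VBW.inf u → (∀ t, VBR u t → t ∈ P) → u ∈ P) (n : ℕ) : VBW.nat n ∈ P := by
  induction n using Nat.strong_induction_on with
  | _ n ih =>
    refine H _ trivial fun t ht => ?_
    cases t <;> simp only [VBR] at ht
    exact ih _ ht

theorem inf_mem_of_loeb {P : Set VBW} (hP : VBAdm P)
    (H : ∀ u, VBR VBW.inf u → (∀ t, VBR u t → t ∈ P) → u ∈ P) : VBW.inf ∈ P :=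
  hP.inf_mem_of_infinite <|
    Set.infinite_of_injective_forall_mem (fun _ _ h => by cases h; rfl) (nat_mem_of_loeb H)

/-- The van Benthem axiom `□◇⊤ → □(□(□p → p) → p)` is valid over the van
Benthem general frame (true at every point under every admissible valuation),
while `□◇⊤ → □⊥` fails at the point `∞+1`. -/
theorem stmt_12 :
    (∀ P : Set VBW, VBAdm P → ∀ w : VBW,
      (∀ v, VBR w v → ∃ u, VBR v u) →
      ∀ v, VBR w v →
        ((∀ u, VBR v u → ((∀ t, VBR u t → t ∈ P) → u ∈ P)) → v ∈ P)) ∧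
    ¬ ((∀ v, VBR VBW.infp v → ∃ u, VBR v u) → ∀ v, ¬ VBR VBW.infp v) := by
  constructor
  · intro P hP w hw v hwv H
    by_cases hw_infp : w = VBW.infp
    · subst hw_infp
      obtain rfl := VBR_infp_iff.mp hwv
      exact inf_mem_of_loeb hP H
    · obtain ⟨u, hu⟩ := hw _ (VBR_nat_zero_of_VBR hwv hw_infp)
      exact absurd hu (not_VBR_nat_zero u)
  · intro h
    refine h (fun v hv => ⟨VBW.inf, ?_⟩) VBW.inf trivial
    rw [VBR_infp_iff.mp hv]
    trivial
end

section
/- In any Kripke frame validating the axioms of GLB — (i) □ₙ(□ₙp → p) → □ₙp for n = 0,1, (ii) □₀p → □₁p, (iii) ◇₀p → □₁◇₀p — the accessibility relation R₁ of □₁ is empty. More precisely: if R₀ is transitive and conversely well-founded (corresponding to the Löb axiom for □₀), xR₁y implies xR₀y (corresponding to (ii)), and xR₀y together with xR₁y' implies y'R₀y (corresponding to (iii)), then R₁ = ∅. -/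
theorem not_rel_self_of_exists_maximal {W : Type*} {R : W → W → Prop}
    (hmax : ∀ S : Set W, S.Nonempty → ∃ m ∈ S, ∀ y ∈ S, ¬ R m y) (x : W) : ¬ R x x := by
  obtain ⟨m, rfl, hm⟩ := hmax {x} (Set.singleton_nonempty x)
  exact hm m rfl

theorem stmt_13_general {W : Type*} (R0 R1 : W → W → Prop)
    (hcwf : ∀ S : Set W, S.Nonempty → ∃ m ∈ S, ∀ y ∈ S, ¬ R0 m y)
    (h21 : ∀ x y, R1 x y → R0 x y)
    (h3 : ∀ x y y', R0 x y → R1 x y' → R0 y' y) :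
    ∀ x y, ¬ R1 x y := by
  intro x y hxy
  have hyy : R0 y y := h3 x y y (h21 x y hxy) hxy
  exact not_rel_self_of_exists_maximal hcwf y hyy

/-- In any Kripke frame with the frame properties corresponding to the GLB
axioms (`R₀` transitive and conversely well-founded, `R₁ ⊆ R₀`, and the
interaction property of axiom (iii)), the relation `R₁` is empty. -/
theorem stmt_13 {W : Type*} (R0 R1 : W → W → Prop)
    (htrans : ∀ x y z, R0 x y → R0 y z → R0 x z)
    (hcwf : ∀ S : Set W, S.Nonempty → ∃ m ∈ S, ∀ y ∈ S, ¬ R0 m y)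
    (h21 : ∀ x y, R1 x y → R0 x y)
    (h3 : ∀ x y y', R0 x y → R1 x y' → R0 y' y) :
    ∀ x y, ¬ R1 x y :=
  stmt_13_general R0 R1 hcwf h21 h3
end

section
/- Let 𝔄 be a Boolean algebra with two operators ◇₀, ◇₁ (duals □₀, □₁) validating the GLB axioms: □ₙ(□ₙx → x) ≤ □ₙx for n = 0,1 (as inequalities holding for all x), □₀x ≤ □₁x, and ◇₀x ≤ □₁◇₀x. Then for every x ∈ 𝔄, ◇₁(□₀(□₀x → x) ∧ ¬x) = ⊥, i.e., □₁(□₀(□₀x → x) → x) = ⊤. -/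
/-! The element `□₀(□₀x → x) ⊓ ¬x` lies below `□₀x` by Löb for `□₀`. The axiom `◇₀y ≤ □₁◇₀y` at `y = ¬x`,
dualized, says `◇₁□₀x ≤ □₀x`, so its `◇₁`-image lies below `□₀x ≤ □₁x`; but, lying below `¬x`, that
image also lies below `◇₁¬x = ¬□₁x`. -/

section Mbox

variable {α : Type*} [BooleanAlgebra α] {f : α → α}

theorem monotone_of_map_sup (hf : ∀ x y, f (x ⊔ y) = f x ⊔ f y) : Monotone f :=
  OrderHomClass.mono (⟨f, hf⟩ : SupHom α α)

theorem compl_mbox (x : α) : (mbox f x)ᶜ = f xᶜ :=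
  compl_compl _

theorem le_mbox_iff {a : α} : a ≤ mbox f a ↔ f aᶜ ≤ aᶜ :=
  le_compl_comm

theorem mbox_eq_top_iff {x : α} : mbox f x = ⊤ ↔ f xᶜ = ⊥ :=
  compl_eq_top

theorem map_eq_bot_of_le_mbox_of_le_compl (hf : Monotone f) {a x : α}
    (hbox : f a ≤ mbox f x) (hax : a ≤ xᶜ) : f a = ⊥ := by
  have hdia : f a ≤ (mbox f x)ᶜ := (compl_mbox x).symm ▸ hf hax
  exact le_bot_iff.mp (by simpa using le_inf hbox hdia)

end Mbox

theorem stmt_14_general {α : Type*} [BooleanAlgebra α] (f0 f1 : α → α)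
    (h1join : ∀ x y : α, f1 (x ⊔ y) = f1 x ⊔ f1 y)
    (hlob0 : ∀ x : α, mbox f0 ((mbox f0 x)ᶜ ⊔ x) ≤ mbox f0 x)
    (h01 : ∀ x : α, mbox f0 x ≤ mbox f1 x)
    (hiii : ∀ x : α, f0 x ≤ mbox f1 (f0 x)) :
    ∀ x : α,
      f1 (mbox f0 ((mbox f0 x)ᶜ ⊔ x) ⊓ xᶜ) = ⊥ ∧
      mbox f1 ((mbox f0 ((mbox f0 x)ᶜ ⊔ x))ᶜ ⊔ x) = ⊤ := by
  intro x
  have hmono : Monotone f1 := monotone_of_map_sup h1join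
  have hstable : f1 (mbox f0 x) ≤ mbox f0 x := le_mbox_iff.mp (hiii xᶜ)
  have hbox : f1 (mbox f0 ((mbox f0 x)ᶜ ⊔ x) ⊓ xᶜ) ≤ mbox f1 x :=
    calc f1 (mbox f0 ((mbox f0 x)ᶜ ⊔ x) ⊓ xᶜ)
        _ ≤ f1 (mbox f0 x) := hmono (inf_le_left.trans (hlob0 x))
        _ ≤ mbox f0 x := hstable
        _ ≤ mbox f1 x := h01 x
  have hbot := map_eq_bot_of_le_mbox_of_le_compl hmono hbox inf_le_right
  refine ⟨hbot, mbox_eq_top_iff.mpr ?_⟩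
  rwa [compl_sup, compl_compl]

/-- In any BAO validating the GLB axioms, `◇₁(□₀(□₀x → x) ⊓ ¬x) = ⊥`,
i.e. `□₁(□₀(□₀x → x) → x) = ⊤`, for every `x`. -/
theorem stmt_14 {α : Type*} [BooleanAlgebra α] (f0 f1 : α → α)
    (h0join : ∀ x y : α, f0 (x ⊔ y) = f0 x ⊔ f0 y) (h0bot : f0 ⊥ = ⊥)
    (h1join : ∀ x y : α, f1 (x ⊔ y) = f1 x ⊔ f1 y) (h1bot : f1 ⊥ = ⊥)
    (hlob0 : ∀ x : α, mbox f0 ((mbox f0 x)ᶜ ⊔ x) ≤ mbox f0 x)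
    (hlob1 : ∀ x : α, mbox f1 ((mbox f1 x)ᶜ ⊔ x) ≤ mbox f1 x)
    (h01 : ∀ x : α, mbox f0 x ≤ mbox f1 x)
    (hiii : ∀ x : α, f0 x ≤ mbox f1 (f0 x)) :
    ∀ x : α,
      f1 (mbox f0 ((mbox f0 x)ᶜ ⊔ x) ⊓ xᶜ) = ⊥ ∧
      mbox f1 ((mbox f0 ((mbox f0 x)ᶜ ⊔ x))ᶜ ⊔ x) = ⊤ :=
  stmt_14_general f0 f1 h1join hlob0 h01 hiii
end

section
/- In any tense algebra — a Boolean algebra with operators ◇ᵢ, ◇ⱼ and converse operators ◇ᵢ⁻¹, ◇ⱼ⁻¹ satisfying the residuation law a ≤ □ⱼ x iff ◇ⱼ⁻¹ a ≤ x for all a, x — the rule (𝒱-mod) is admissible: if for some function g : 𝔄 → 𝔄 interpreting χ we have, instantiating p := □ⱼ⁻¹¬a, that (first premise) □ⱼ⁻¹¬a ≤ g(□ⱼ⁻¹¬a), (second premise) g(□ⱼ⁻¹¬a) ∧ □ᵢg(□ⱼ⁻¹¬a) ≤ □ⱼ⁻¹¬a, and (third premise) a ≤ □ⱼ g(□ⱼ⁻¹¬a),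 then a ≤ □ⱼ⊥. -/
/-- Admissibility of the rule (𝒱-mod) in tense algebras: `fjinv` is the
residual/converse diamond of `◇ⱼ` (`a ≤ □ⱼx ↔ ◇ⱼ⁻¹a ≤ x`), and
`c := □ⱼ⁻¹¬a = (◇ⱼ⁻¹a)ᶜ`.  If `c ≤ g c`, `g c ⊓ □ᵢ(g c) ≤ c`, and
`a ≤ □ⱼ(g c)`, then `a ≤ □ⱼ⊥`. -/
theorem stmt_18 {α : Type*} [BooleanAlgebra α] (fi fj fjinv : α → α)
    (hijoin : ∀ x y : α, fi (x ⊔ y) = fi x ⊔ fi y) (hibot : fi ⊥ = ⊥)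
    (hjjoin : ∀ x y : α, fj (x ⊔ y) = fj x ⊔ fj y) (hjbot : fj ⊥ = ⊥)
    (hres : ∀ a x : α, a ≤ mbox fj x ↔ fjinv a ≤ x)
    (g : α → α) (a c : α) (hc : c = (fjinv a)ᶜ)
    (h1 : c ≤ g c)
    (h2 : g c ⊓ mbox fi (g c) ≤ c)
    (h3 : a ≤ mbox fj (g c)) :
    a ≤ mbox fj ⊥ := by
  have hd : fjinv a ≤ g c := (hres a (g c)).mp h3
  have hgc : g c = ⊤ := by
    have : (fjinv a)ᶜ ⊔ fjinv a ≤ g c := sup_le (hc ▸ h1) hd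
    simpa [compl_sup_eq_top] using this
  have hbox : mbox fi (g c) = ⊤ := by
    simp [mbox, hgc, hibot]
  have hcTop : c = ⊤ := top_unique (by simpa [hgc, hbox, mbox, hibot] using h2)
  have : fjinv a = ⊥ := by
    have := hcTop ▸ hc
    simpa [eq_comm, compl_eq_top] using this.symm
  rw [hres]
  simp [this]
end
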